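/- Let H = S(G,a,b) be a shortest path graph and let U be a vertex of H with the unique vertex-path property, with (a,b)-geodesics in G having at least two index levels. Let S be the one-sum of H and a clique Kₙ formed by identifying U with a vertex of Kₙ. Then S is a shortest path graph; moreover a base graph G' for S can be built from G with the same number of index levels, in which every vertex of H other than U that had the unique vertex-path property still has it, and every new clique vertex other than the identified one has the unique vertex-path property. -/

import Mathlib

open SimpleGraph

variable {V : Type*}

/-- An `(a,b)`-geodesic in `G`: a shortest path from `a` to `b`. -/
def Geodesic (G : SimpleGraph V) (a b : V) : Type _ :=
  {p : G.Walk a b // p.IsPath ∧ p.length = G.dist a b}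

/-- The set of index levels at which two geodesics differ
(position `i` in the support list is index level `i`; position `0` is `a`). -/
def diffIndices (G : SimpleGraph V) (a b : V) (U W : Geodesic G a b) : Set ℕ :=
  {i | U.1.support[i]? ≠ W.1.support[i]?}

/-- The shortest path graph `S(G,a,b)`: vertices are the `(a,b)`-geodesics,
two geodesics being adjacent iff they differ at exactly one index level. -/
def SPG (G : SimpleGraph V) (a b : V) : SimpleGraph (Geodesic G a b) where
  Adj U W := ∃! i, i ∈ diffIndices G a b U W
  symm := ⟨by
    rintro U W ⟨i, hi, hu⟩
    exact ⟨i, Ne.symm hi, fun j hj => hu j (Ne.symm hj)⟩⟩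
  loopless := ⟨by
    rintro U ⟨i, hi, -⟩
    exact hi rfl⟩

/-- `U` has the unique vertex-path property: `U` is the unique `(a,b)`-geodesic
in `G` passing through some vertex `v`. -/
def UVP (G : SimpleGraph V) (a b : V) (U : Geodesic G a b) : Prop :=
  ∃ v : V, v ∈ U.1.support ∧ ∀ W : Geodesic G a b, v ∈ W.1.support → W = U

/-!
Write `u₀ = a, …, u_p = b` for the vertices of `U` and choose `k` with `k + 2 ≤ p` such that the
unique-path vertex of `U` is `u_k` or `u_{k+2}`. The new graph adds the `m` clique vertices to `G`
as common neighbours of `u_k` and `u_{k+2}` only. Sending them to `u_{k+1}` is a retraction onto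
`G`, so distances between old vertices do not change. A geodesic through a new vertex passes
through both of its neighbours `u_k` and `u_{k+2}`, so its image under the retraction is a
geodesic through the unique-path vertex, i.e. `U`. Hence the new geodesics are the old ones
together with the copies of `U` in which `u_{k+1}` is replaced by a new vertex. These copies
differ from each other and from `U` exactly at level `k + 1`, and from every other old geodesic
`X` at a second level as well, since otherwise `X` would pass through `u_k` and `u_{k+2}`.
-/

namespace List

variable {α β : Type*}

theorem existsUnique_getElem?_ne_map_iff {f : α → β} (hf : Function.Injective f)
    (l₁ l₂ : List α) :
    (∃! i : ℕ, (l₁.map f)[i]? ≠ (l₂.map f)[i]?) ↔ ∃! i : ℕ, l₁[i]? ≠ l₂[i]? := by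
  simp only [getElem?_map, (Option.map_injective hf).ne_iff]

theorem existsUnique_getElem?_ne_set_iff {l₁ l₂ : List α} {n : ℕ} {x : α}
    (hn : n < l₂.length) (hx : l₁[n]? ≠ some x) :
    (∃! i : ℕ, l₁[i]? ≠ (l₂.set n x)[i]?) ↔ ∀ i ≠ n, l₁[i]? = l₂[i]? := by
  have hset : (l₂.set n x)[n]? = some x := getElem?_set_self hn
  constructor
  · rintro ⟨i, -, hi⟩ j hj
    by_contra hne
    have hji : j = i :=
      hi j (show l₁[j]? ≠ (l₂.set n x)[j]? by rwa [getElem?_set_ne (Ne.symm hj)])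
    have hni : n = i := hi n (show l₁[n]? ≠ (l₂.set n x)[n]? by rwa [hset])
    exact hj (hji.trans hni.symm)
  · intro h
    refine ⟨n, show l₁[n]? ≠ (l₂.set n x)[n]? by rwa [hset], fun i hi => ?_⟩
    by_contra hin
    exact (hi : l₁[i]? ≠ (l₂.set n x)[i]?) (by rw [getElem?_set_ne (Ne.symm hin), h i hin])

theorem existsUnique_getElem?_ne_set_set {l : List α} {n : ℕ} {x y : α}
    (hn : n < l.length) (hxy : x ≠ y) :
    ∃! i : ℕ, (l.set n x)[i]? ≠ (l.set n y)[i]? :=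
  (existsUnique_getElem?_ne_set_iff hn (by simpa [getElem?_set_self hn] using hxy)).mpr
    fun _ hi => getElem?_set_ne (Ne.symm hi)

theorem IsChain.set_succ {R : α → α → Prop} {l : List α} (hl : l.IsChain R)
    {n : ℕ} {x y z : α} (hx : l[n]? = some x) (hz : l[n + 2]? = some z) (h₁ : R x y)
    (h₂ : R y z) : (l.set (n + 1) y).IsChain R := by
  rw [isChain_iff_getElem] at hl ⊢
  intro i hi
  simp only [length_set] at hi
  simp only [getElem_set]
  grind

end List

namespace SimpleGraph

section Hom

variable {W W' : Type*} {G : SimpleGraph W} {H : SimpleGraph W'}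

theorem Hom.dist_le (f : G →g H) {x y : W} (h : G.Reachable x y) :
    H.dist (f x) (f y) ≤ G.dist x y := by
  obtain ⟨p, hp⟩ := h.exists_walk_length_eq_dist
  exact (SimpleGraph.dist_le (p.map f)).trans_eq (by rw [Walk.length_map, hp])

theorem Hom.dist_eq_of_leftInverse (f : G →g H) (g : H →g G) (hgf : Function.LeftInverse g f)
    {x y : W} (h : G.Reachable x y) : H.dist (f x) (f y) = G.dist x y := by
  refine le_antisymm (f.dist_le h) ?_
  calc G.dist x y = G.dist (g (f x)) (g (f y)) := by rw [hgf, hgf]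
    _ ≤ H.dist (f x) (f y) := g.dist_le (h.map f)

theorem Walk.IsPath.exists_adj_adj_of_mem_support {u v z : W} {p : G.Walk u v} (hp : p.IsPath)
    (hz : z ∈ p.support) (hzu : z ≠ u) (hzv : z ≠ v) :
    ∃ x ∈ p.support, ∃ y ∈ p.support, x ≠ y ∧ G.Adj x z ∧ G.Adj z y := by
  obtain ⟨n, rfl, hn⟩ := Walk.mem_support_iff_exists_getVert.mp hz
  have hn0 : n ≠ 0 := by rintro rfl; exact hzu p.getVert_zero
  have hnl : n ≠ p.length := by rintro rfl; exact hzv p.getVert_length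
  refine ⟨p.getVert (n - 1), p.getVert_mem_support _, p.getVert (n + 1),
    p.getVert_mem_support _, fun h => ?_, ?_, p.adj_getVert_succ (by omega)⟩
  · have := hp.getVert_injOn (by simp only [Set.mem_ofPred_eq]; omega)
      (by simp only [Set.mem_ofPred_eq]; omega) h
    omega
  · simpa [Nat.sub_add_cancel (Nat.pos_of_ne_zero hn0)] using
      p.adj_getVert_succ (i := n - 1) (by omega)

end Hom

section AddCommonNeighbors

variable {W ι : Type*} (G : SimpleGraph W) (c d : W) (ι)

def addCommonNeighbors : SimpleGraph (W ⊕ ι) where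
  Adj
    | .inl x, .inl y => G.Adj x y
    | .inl x, .inr _ | .inr _, .inl x => x = c ∨ x = d
    | .inr _, .inr _ => False
  symm := ⟨by rintro (x | x) (y | y) h <;> first | exact G.adj_symm h | exact h⟩
  loopless := ⟨by rintro (x | x) h; exacts [G.irrefl h, h]⟩

namespace addCommonNeighbors

variable {G c d ι}

@[simp] theorem adj_inr_inl {i : ι} {x : W} :
    (G.addCommonNeighbors c d ι).Adj (.inr i) (.inl x) ↔ x = c ∨ x = d := Iff.rfl

@[simp] theorem not_adj_inr_inr {i j : ι} :
    ¬ (G.addCommonNeighbors c d ι).Adj (.inr i) (.inr j) :=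
  id

variable (G c d ι)

def inlHom : G →g G.addCommonNeighbors c d ι := ⟨Sum.inl, id⟩

def collapse {u : W} (hcu : G.Adj c u) (hud : G.Adj u d) :
    G.addCommonNeighbors c d ι →g G where
  toFun := Sum.elim id fun _ => u
  map_rel' := by
    rintro (x | i) (y | j) h
    · exact h
    · rcases (h : x = c ∨ x = d) with rfl | rfl
      exacts [hcu, hud.symm]
    · rcases (h : y = c ∨ y = d) with rfl | rfl
      exacts [hcu.symm, hud]
    · exact absurd h not_adj_inr_inr

variable {G c d ι}

theorem inlHom_injective : Function.Injective (inlHom G c d ι) := Sum.inl_injective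

theorem dist_inl_inl {u : W} (hcu : G.Adj c u) (hud : G.Adj u d) {x y : W}
    (h : G.Reachable x y) : (G.addCommonNeighbors c d ι).dist (.inl x) (.inl y) = G.dist x y :=
  (inlHom G c d ι).dist_eq_of_leftInverse (collapse G c d ι hcu hud) (fun _ => rfl) h

theorem inl_mem_support_of_inr_mem {x y : W}
    {p : (G.addCommonNeighbors c d ι).Walk (.inl x) (.inl y)} (hp : p.IsPath) {i : ι}
    (hi : .inr i ∈ p.support) : .inl c ∈ p.support ∧ .inl d ∈ p.support := by
  obtain ⟨z₁, hz₁, z₂, hz₂, hne, h₁, h₂⟩ :=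
    hp.exists_adj_adj_of_mem_support hi Sum.inr_ne_inl Sum.inr_ne_inl
  obtain ⟨x₁, rfl⟩ : ∃ x₁, z₁ = .inl x₁ := by cases z₁ <;> simp_all
  obtain ⟨x₂, rfl⟩ : ∃ x₂, z₂ = .inl x₂ := by cases z₂ <;> simp_all
  rw [adj_comm, adj_inr_inl] at h₁
  rw [adj_inr_inl] at h₂
  rcases h₁ with rfl | rfl <;> rcases h₂ with rfl | rfl <;> simp_all

end addCommonNeighbors

end AddCommonNeighbors

section OneSumClique

variable {α β ι : Type*}

def oneSumClique (H : SimpleGraph α) (x : α) (ι : Type*) : SimpleGraph (α ⊕ ι) :=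
  SimpleGraph.fromRel fun s t =>
    (∃ p q, s = Sum.inl p ∧ t = Sum.inl q ∧ H.Adj p q) ∨
    (∃ i, s = Sum.inl x ∧ t = Sum.inr i) ∨
    (∃ i j, s = Sum.inr i ∧ t = Sum.inr j ∧ i ≠ j)

namespace oneSumClique

variable {H : SimpleGraph α} {x : α} {K : SimpleGraph β}

@[simp] theorem adj_inl_inl {p q : α} :
    (H.oneSumClique x ι).Adj (.inl p) (.inl q) ↔ H.Adj p q := by
  simp only [oneSumClique, fromRel_adj]
  grind [H.adj_symm, H.ne_of_adj]

@[simp] theorem adj_inl_inr {p : α} {i : ι} :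
    (H.oneSumClique x ι).Adj (.inl p) (.inr i) ↔ p = x := by
  simp [oneSumClique, fromRel_adj, eq_comm]

@[simp] theorem adj_inr_inl {p : α} {i : ι} :
    (H.oneSumClique x ι).Adj (.inr i) (.inl p) ↔ p = x := by
  simp [oneSumClique, fromRel_adj, eq_comm]

@[simp] theorem adj_inr_inr {i j : ι} :
    (H.oneSumClique x ι).Adj (.inr i) (.inr j) ↔ i ≠ j := by
  simp only [oneSumClique, fromRel_adj]
  grind

noncomputable def isoOfBijective (f : α → β) (g : ι → β)
    (hbij : Function.Bijective (Sum.elim f g)) (hff : ∀ p q, K.Adj (f p) (f q) ↔ H.Adj p q)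
    (hfg : ∀ p i, K.Adj (f p) (g i) ↔ p = x)
    (hgg : ∀ i j, i ≠ j → K.Adj (g i) (g j)) : H.oneSumClique x ι ≃g K where
  toEquiv := Equiv.ofBijective _ hbij
  map_rel_iff' := by
    rintro (p | i) (q | j)
    · exact (hff p q).trans adj_inl_inl.symm
    · exact (hfg p j).trans adj_inl_inr.symm
    · exact K.adj_comm _ _ |>.trans <| (hfg q i).trans adj_inr_inl.symm
    · exact ⟨fun h => adj_inr_inr.mpr fun hij => K.loopless.irrefl _ (hij ▸ h :),
        fun h => hgg i j (adj_inr_inr.mp h)⟩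

end oneSumClique

end OneSumClique

end SimpleGraph

namespace Geodesic

variable {W W' : Type*} {G : SimpleGraph W} {H : SimpleGraph W'} {a b : W}

theorem ext_support {X Y : Geodesic G a b} (h : X.1.support = Y.1.support) : X = Y :=
  Subtype.ext (Walk.ext_support h)

theorem length_support (X : Geodesic G a b) : X.1.support.length = G.dist a b + 1 := by
  rw [Walk.length_support, X.2.2]

theorem getElem?_support (X : Geodesic G a b) {n : ℕ} (hn : n ≤ G.dist a b) :
    X.1.support[n]? = some (X.1.getVert n) :=
  (X.1.getVert_eq_support_getElem? (by rw [X.2.2]; exact hn)).symm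

theorem spg_adj_iff {X Y : Geodesic G a b} :
    (SPG G a b).Adj X Y ↔ ∃! i : ℕ, X.1.support[i]? ≠ Y.1.support[i]? := Iff.rfl

def map (f : G →g H) (hf : H.dist (f a) (f b) = G.dist a b) (X : Geodesic G a b) :
    Geodesic H (f a) (f b) :=
  have hlen : (X.1.map f).length = H.dist (f a) (f b) := by rw [Walk.length_map, X.2.2, hf]
  ⟨X.1.map f, Walk.isPath_of_length_eq_dist _ hlen, hlen⟩

section Map

variable (f : G →g H) (hf : H.dist (f a) (f b) = G.dist a b)

@[simp] theorem support_map (X : Geodesic G a b) :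
    (X.map f hf).1.support = X.1.support.map f :=
  Walk.support_map _ _

theorem map_injective (hinj : Function.Injective f) : Function.Injective (map f hf) :=
  fun X Y h => ext_support <| List.map_injective_iff.mpr hinj <| by
    rw [← support_map f hf, h, support_map]

theorem spg_adj_map_iff (hinj : Function.Injective f) {X Y : Geodesic G a b} :
    (SPG H (f a) (f b)).Adj (X.map f hf) (Y.map f hf) ↔ (SPG G a b).Adj X Y := by
  simp only [spg_adj_iff, support_map, List.existsUnique_getElem?_ne_map_iff hinj]

end Map

noncomputable def ofSupport (l : List W) (hl : l.IsChain G.Adj)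
    (hlen : l.length = G.dist a b + 1) (ha : l[0]? = some a) (hb : l[G.dist a b]? = some b) :
    Geodesic G a b :=
  have hne : l ≠ [] := List.ne_nil_of_length_pos (by omega)
  have hhead : l.head hne = a := by
    rw [List.head_eq_getElem]
    simpa [List.getElem?_eq_getElem (by omega : 0 < l.length)] using ha
  have hlast : l.getLast hne = b := by
    rw [List.getLast_eq_getElem]
    simpa [hlen, List.getElem?_eq_getElem (by omega : G.dist a b < l.length)] using hb
  have hwlen : ((Walk.ofSupport l hne hl).copy hhead hlast).length = G.dist a b := by
    rw [Walk.length_copy, Walk.length_ofSupport]; omega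
  ⟨_, Walk.isPath_of_length_eq_dist _ hwlen, hwlen⟩

@[simp] theorem support_ofSupport (l : List W) (hl : l.IsChain G.Adj)
    (hlen : l.length = G.dist a b + 1) (ha : l[0]? = some a) (hb : l[G.dist a b]? = some b) :
    (ofSupport l hl hlen ha hb).1.support = l := by
  simp [ofSupport, Walk.support_ofSupport]

theorem index_eq_of_getElem?_support_eq (X : Geodesic G a b) {i j : ℕ} (hj : j ≤ G.dist a b)
    (h : X.1.support[i]? = X.1.support[j]?) : i = j := by
  have hnodup := List.nodup_iff_getElem?_ne_getElem?.mp X.2.1.support_nodup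
  have hlen := X.length_support
  have hi : i < X.1.support.length := by
    by_contra hi
    rw [List.getElem?_eq_none (by omega), List.getElem?_eq_getElem (by omega)] at h
    cases h
  rcases lt_trichotomy i j with hij | rfl | hij
  · exact absurd h (hnodup i j hij (by omega))
  · rfl
  · exact absurd h.symm (hnodup j i hij hi)

def IsUniqueThrough (U : Geodesic G a b) (x y : W) : Prop :=
  ∀ X : Geodesic G a b, x ∈ X.1.support → y ∈ X.1.support → X = U

theorem exists_isUniqueThrough_of_uvp (hlev : 3 ≤ G.dist a b) {U : Geodesic G a b}
    (hU : UVP G a b U) :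
    ∃ k, k + 2 ≤ G.dist a b ∧ U.IsUniqueThrough (U.1.getVert k) (U.1.getVert (k + 2)) := by
  obtain ⟨v, hv, hvU⟩ := hU
  obtain ⟨n, rfl, hn⟩ := Walk.mem_support_iff_exists_getVert.mp hv
  rw [U.2.2] at hn
  by_cases h : n + 2 ≤ G.dist a b
  · exact ⟨n, h, fun X hX _ => hvU X hX⟩
  · refine ⟨n - 2, by omega, fun X _ hX => hvU X ?_⟩
    rwa [show n - 2 + 2 = n by omega] at hX

end Geodesic

namespace OneSum

open addCommonNeighbors

variable {W ι : Type*} {G : SimpleGraph W} {a b : W} {U : Geodesic G a b} {k : ℕ}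

abbrev baseGraph (U : Geodesic G a b) (k : ℕ) (ι : Type*) : SimpleGraph (W ⊕ ι) :=
  G.addCommonNeighbors (U.1.getVert k) (U.1.getVert (k + 2)) ι

def newSupport (U : Geodesic G a b) (k : ℕ) (j : ι) : List (W ⊕ ι) :=
  (U.1.support.map .inl).set (k + 1) (.inr j)

theorem adj_left (hk : k + 2 ≤ G.dist a b) : G.Adj (U.1.getVert k) (U.1.getVert (k + 1)) :=
  U.1.adj_getVert_succ (by rw [U.2.2]; omega)

theorem adj_right (hk : k + 2 ≤ G.dist a b) :
    G.Adj (U.1.getVert (k + 1)) (U.1.getVert (k + 2)) :=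
  U.1.adj_getVert_succ (by rw [U.2.2]; omega)

theorem dist_baseGraph (hk : k + 2 ≤ G.dist a b) :
    (baseGraph U k ι).dist (.inl a) (.inl b) = G.dist a b :=
  dist_inl_inl (adj_left hk) (adj_right hk) ⟨U.1⟩

noncomputable def lift (U : Geodesic G a b) (hk : k + 2 ≤ G.dist a b) (X : Geodesic G a b) :
    Geodesic (baseGraph U k ι) (.inl a) (.inl b) :=
  X.map (inlHom _ _ _ ι) (dist_baseGraph hk)

noncomputable def project (hk : k + 2 ≤ G.dist a b)
    (Y : Geodesic (baseGraph U k ι) (.inl a) (.inl b)) : Geodesic G a b :=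
  Geodesic.map (a := Sum.inl a) (b := Sum.inl b)
    (collapse G (U.1.getVert k) (U.1.getVert (k + 2)) ι (adj_left hk) (adj_right hk))
    (dist_baseGraph (U := U) (ι := ι) hk).symm Y

theorem support_lift (hk : k + 2 ≤ G.dist a b) (X : Geodesic G a b) :
    (lift U hk X : Geodesic (baseGraph U k ι) _ _).1.support = X.1.support.map .inl :=
  Geodesic.support_map _ _ X

theorem support_project (hk : k + 2 ≤ G.dist a b)
    (Y : Geodesic (baseGraph U k ι) (.inl a) (.inl b)) :
    (project hk Y).1.support = Y.1.support.map (Sum.elim id fun _ => U.1.getVert (k + 1)) :=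
  Geodesic.support_map _ _ Y

theorem length_newSupport (j : ι) : (newSupport U k j).length = G.dist a b + 1 := by
  simp [newSupport, U.length_support]

theorem getElem?_newSupport_self (hk : k + 2 ≤ G.dist a b) (j : ι) :
    (newSupport U k j)[k + 1]? = some (.inr j) :=
  List.getElem?_set_self (by simp [U.length_support]; omega)

theorem getElem?_newSupport_of_ne (j : ι) {i : ℕ} (hi : i ≠ k + 1) :
    (newSupport U k j)[i]? = (U.1.support.map .inl)[i]? :=
  List.getElem?_set_ne (Ne.symm hi)

theorem isChain_newSupport (hk : k + 2 ≤ G.dist a b) (j : ι) :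
    (newSupport U k j).IsChain (baseGraph U k ι).Adj :=
  ((List.isChain_map Sum.inl).mpr U.1.isChain_adj_support).set_succ
    (by rw [List.getElem?_map, U.getElem?_support (by omega)]; rfl)
    (by rw [List.getElem?_map, U.getElem?_support hk]; rfl)
    (x := .inl (U.1.getVert k)) (y := .inr j) (z := .inl (U.1.getVert (k + 2)))
    (Or.inl rfl) (Or.inr rfl)

noncomputable def newGeodesic (U : Geodesic G a b) (hk : k + 2 ≤ G.dist a b) (j : ι) :
    Geodesic (baseGraph U k ι) (.inl a) (.inl b) :=
  Geodesic.ofSupport (newSupport U k j) (isChain_newSupport hk j)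
    (by rw [length_newSupport, dist_baseGraph hk])
    (by rw [getElem?_newSupport_of_ne _ (by omega), List.getElem?_map,
      U.getElem?_support (Nat.zero_le _), U.1.getVert_zero]; rfl)
    (by rw [dist_baseGraph hk, getElem?_newSupport_of_ne _ (by omega), List.getElem?_map,
      U.getElem?_support le_rfl, U.1.getVert_of_length_le U.2.2.le]; rfl)

theorem support_newGeodesic (hk : k + 2 ≤ G.dist a b) (j : ι) :
    (newGeodesic U hk j : Geodesic (baseGraph U k ι) _ _).1.support = newSupport U k j :=
  Geodesic.support_ofSupport ..

theorem eq_lift_project_of_forall_inr_notMem (hk : k + 2 ≤ G.dist a b)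
    (Y : Geodesic (baseGraph U k ι) (.inl a) (.inl b)) (hY : ∀ j : ι, .inr j ∉ Y.1.support) :
    Y = lift U hk (project hk Y) := by
  refine Geodesic.ext_support ?_
  rw [support_lift, support_project, List.map_map]
  conv_lhs => rw [← List.map_id Y.1.support]
  refine List.map_congr_left fun z hz => ?_
  cases z with
  | inl x => rfl
  | inr j => exact absurd hz (hY j)

theorem project_eq_of_inr_mem (hk : k + 2 ≤ G.dist a b)
    (huniq : U.IsUniqueThrough (U.1.getVert k) (U.1.getVert (k + 2)))
    (Y : Geodesic (baseGraph U k ι) (.inl a) (.inl b)) {j : ι} (hj : .inr j ∈ Y.1.support) :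
    project hk Y = U := by
  obtain ⟨hc, hd⟩ := inl_mem_support_of_inr_mem Y.2.1 hj
  refine huniq _ ?_ ?_ <;> rw [support_project]
  exacts [List.mem_map.mpr ⟨_, hc, rfl⟩, List.mem_map.mpr ⟨_, hd, rfl⟩]

theorem getElem?_support_of_project_eq (hk : k + 2 ≤ G.dist a b)
    (Y : Geodesic (baseGraph U k ι) (.inl a) (.inl b)) (hY : project hk Y = U) {i : ℕ}
    (hi : i ≠ k + 1) : Y.1.support[i]? = (U.1.support.map .inl)[i]? := by
  have h : (Y.1.support[i]?).map (Sum.elim id fun _ => U.1.getVert (k + 1)) =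
      U.1.support[i]? := by
    rw [← List.getElem?_map, ← support_project hk, hY]
  rw [List.getElem?_map]
  rcases hYi : Y.1.support[i]? with _ | x | j <;> rw [hYi] at h
  · simp [← h]
  · simp [← h]
  · have hu : U.1.support[i]? = U.1.support[k + 1]? :=
      h.symm.trans (U.getElem?_support (by omega)).symm
    exact absurd (U.index_eq_of_getElem?_support_eq (by omega) hu) hi

theorem eq_lift_or_eq_newGeodesic (hk : k + 2 ≤ G.dist a b)
    (huniq : U.IsUniqueThrough (U.1.getVert k) (U.1.getVert (k + 2)))
    (Y : Geodesic (baseGraph U k ι) (.inl a) (.inl b)) :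
    (∃ X, Y = lift U hk X) ∨ ∃ j, Y = newGeodesic U hk j := by
  by_cases hY : ∃ j : ι, .inr j ∈ Y.1.support
  · obtain ⟨j, hj⟩ := hY
    have hproj := project_eq_of_inr_mem hk huniq Y hj
    obtain ⟨i, hi⟩ := List.mem_iff_getElem?.mp hj
    obtain rfl : i = k + 1 := by
      by_contra hne
      rw [getElem?_support_of_project_eq hk Y hproj hne, List.getElem?_map] at hi
      simp at hi
    refine Or.inr ⟨j, Geodesic.ext_support <| List.ext_getElem? fun n => ?_⟩
    rw [support_newGeodesic]
    by_cases hn : n = k + 1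
    · rw [hn, hi, getElem?_newSupport_self hk]
    · rw [getElem?_support_of_project_eq hk Y hproj hn, getElem?_newSupport_of_ne _ hn]
  · exact Or.inl ⟨_, eq_lift_project_of_forall_inr_notMem hk Y (not_exists.mp hY)⟩

theorem inr_mem_support_newGeodesic (hk : k + 2 ≤ G.dist a b) (j : ι) :
    .inr j ∈ (newGeodesic U hk j).1.support := by
  rw [support_newGeodesic]
  exact List.mem_of_getElem? (getElem?_newSupport_self hk j)

theorem inr_notMem_support_lift (hk : k + 2 ≤ G.dist a b) (X : Geodesic G a b) (j : ι) :
    .inr j ∉ (lift U hk X : Geodesic (baseGraph U k ι) _ _).1.support := by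
  simp [support_lift]

theorem mem_support_newGeodesic (hk : k + 2 ≤ G.dist a b) {j : ι} {z : W ⊕ ι}
    (hz : z ∈ (newGeodesic U hk j).1.support) :
    (∃ x ∈ U.1.support, z = .inl x) ∨ z = .inr j := by
  rw [support_newGeodesic] at hz
  rcases List.mem_or_eq_of_mem_set hz with h | h
  · obtain ⟨x, hx, rfl⟩ := List.mem_map.mp h
    exact Or.inl ⟨x, hx, rfl⟩
  · exact Or.inr h

theorem bijective_lift_newGeodesic (hk : k + 2 ≤ G.dist a b)
    (huniq : U.IsUniqueThrough (U.1.getVert k) (U.1.getVert (k + 2))) :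
    Function.Bijective (Sum.elim (lift U hk) (newGeodesic (ι := ι) U hk)) := by
  refine ⟨Function.Injective.sumElim
    (Geodesic.map_injective _ (dist_baseGraph hk) inlHom_injective)
    (fun j j' h => ?_) (fun X j h => ?_), fun Y => ?_⟩
  · have h' := congrArg (fun Y => Y.1.support[k + 1]?) h
    simpa only [support_newGeodesic, getElem?_newSupport_self hk, Option.some.injEq,
      Sum.inr.injEq] using h'
  · exact inr_notMem_support_lift hk X j (h ▸ inr_mem_support_newGeodesic hk j)
  · rcases eq_lift_or_eq_newGeodesic hk huniq Y with ⟨X, rfl⟩ | ⟨j, rfl⟩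
    exacts [⟨.inl X, rfl⟩, ⟨.inr j, rfl⟩]

theorem spg_adj_lift_lift_iff (hk : k + 2 ≤ G.dist a b) {X Y : Geodesic G a b} :
    (SPG (baseGraph U k ι) _ _).Adj (lift U hk X) (lift U hk Y) ↔ (SPG G a b).Adj X Y :=
  Geodesic.spg_adj_map_iff _ _ inlHom_injective

theorem spg_adj_lift_newGeodesic_iff (hk : k + 2 ≤ G.dist a b)
    (huniq : U.IsUniqueThrough (U.1.getVert k) (U.1.getVert (k + 2))) (X : Geodesic G a b)
    (j : ι) : (SPG (baseGraph U k ι) _ _).Adj (lift U hk X) (newGeodesic U hk j) ↔ X = U := by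
  rw [Geodesic.spg_adj_iff, support_lift, support_newGeodesic, newSupport,
    List.existsUnique_getElem?_ne_set_iff (by simp [U.length_support]; omega) (by simp)]
  simp only [List.getElem?_map, (Option.map_injective Sum.inl_injective).eq_iff]
  refine ⟨fun h => huniq X ?_ ?_, by rintro rfl _ _; rfl⟩
  · exact List.mem_of_getElem? ((h k (by omega)).trans (U.getElem?_support (by omega)))
  · exact List.mem_of_getElem? ((h (k + 2) (by omega)).trans (U.getElem?_support hk))

theorem spg_adj_newGeodesic (hk : k + 2 ≤ G.dist a b) {j j' : ι} (h : j ≠ j') :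
    (SPG (baseGraph U k ι) _ _).Adj (newGeodesic U hk j) (newGeodesic U hk j') := by
  rw [Geodesic.spg_adj_iff, support_newGeodesic, support_newGeodesic]
  exact List.existsUnique_getElem?_ne_set_set (by simp [U.length_support]; omega)
    (by simpa using h)

theorem uvp_lift (hk : k + 2 ≤ G.dist a b)
    (huniq : U.IsUniqueThrough (U.1.getVert k) (U.1.getVert (k + 2))) {X : Geodesic G a b}
    (hXU : X ≠ U) (hX : UVP G a b X) : UVP (baseGraph U k ι) _ _ (lift U hk X) := by
  obtain ⟨w, hw, hwX⟩ := hX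
  refine ⟨.inl w, by simpa [support_lift] using hw, fun Y hY => ?_⟩
  rcases eq_lift_or_eq_newGeodesic hk huniq Y with ⟨X', rfl⟩ | ⟨j, rfl⟩
  · rw [hwX X' (by simpa [support_lift] using hY)]
  · rcases mem_support_newGeodesic hk hY with ⟨x, hx, hxw⟩ | h
    · cases hxw
      exact absurd (hwX U hx).symm hXU
    · cases h

theorem uvp_newGeodesic (hk : k + 2 ≤ G.dist a b)
    (huniq : U.IsUniqueThrough (U.1.getVert k) (U.1.getVert (k + 2))) (j : ι) :
    UVP (baseGraph U k ι) _ _ (newGeodesic U hk j) := by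
  refine ⟨.inr j, inr_mem_support_newGeodesic hk j, fun Y hY => ?_⟩
  rcases eq_lift_or_eq_newGeodesic hk huniq Y with ⟨X, rfl⟩ | ⟨j', rfl⟩
  · exact absurd hY (inr_notMem_support_lift hk X j)
  · rcases mem_support_newGeodesic hk hY with ⟨x, -, h⟩ | h
    · cases h
    · cases h
      rfl

noncomputable def iso (hk : k + 2 ≤ G.dist a b)
    (huniq : U.IsUniqueThrough (U.1.getVert k) (U.1.getVert (k + 2))) :
    (SPG G a b).oneSumClique U ι ≃g SPG (baseGraph U k ι) (.inl a) (.inl b) :=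
  SimpleGraph.oneSumClique.isoOfBijective (lift U hk) (newGeodesic U hk)
    (bijective_lift_newGeodesic hk huniq) (fun _ _ => spg_adj_lift_lift_iff hk)
    (spg_adj_lift_newGeodesic_iff hk huniq) (fun _ _ => spg_adj_newGeodesic hk)

end OneSum

theorem stmt_14_general {V : Type u} (G : SimpleGraph V) (a b : V)
    (hlev : 3 ≤ G.dist a b) (U : Geodesic G a b) (hU : UVP G a b U) (m : ℕ) :
    -- `S`: the one-sum of `SPG G a b` with the clique `K_{m+1}`, identifying `U`
    -- with one clique vertex; the other `m` clique vertices are the `Sum.inr i`.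
    let S : SimpleGraph (Geodesic G a b ⊕ Fin m) := SimpleGraph.fromRel fun x y =>
      (∃ p q, x = Sum.inl p ∧ y = Sum.inl q ∧ (SPG G a b).Adj p q) ∨
      (∃ i, x = Sum.inl U ∧ y = Sum.inr i) ∨
      (∃ i j, x = Sum.inr i ∧ y = Sum.inr j ∧ i ≠ j)
    ∃ (V' : Type u) (G' : SimpleGraph V') (a' b' : V') (e : SPG G' a' b' ≃g S),
      G'.dist a' b' = G.dist a b ∧
      (∀ X : Geodesic G a b, X ≠ U → UVP G a b X → UVP G' a' b' (e.symm (Sum.inl X))) ∧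
      (∀ i : Fin m, UVP G' a' b' (e.symm (Sum.inr i))) := by
  obtain ⟨k, hk, huniq⟩ := Geodesic.exists_isUniqueThrough_of_uvp hlev hU
  exact ⟨V ⊕ Fin m, OneSum.baseGraph U k (Fin m), .inl a, .inl b, (OneSum.iso hk huniq).symm,
    OneSum.dist_baseGraph hk, fun _ hXU hX => OneSum.uvp_lift hk huniq hXU hX,
    OneSum.uvp_newGeodesic hk huniq⟩

/-- the one-sum of a shortest path graph and a clique at a vertex with
the unique vertex-path property is a shortest path graph, realizable with the same
number of index levels and preserving the unique vertex-path property. -/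
theorem stmt_14 {V : Type u} (G : SimpleGraph V) (a b : V) (hab : a ≠ b)
    (hlev : 3 ≤ G.dist a b) (U : Geodesic G a b) (hU : UVP G a b U) (m : ℕ) :
    -- `S`: the one-sum of `SPG G a b` with the clique `K_{m+1}`, identifying `U`
    -- with one clique vertex; the other `m` clique vertices are the `Sum.inr i`.
    let S : SimpleGraph (Geodesic G a b ⊕ Fin m) := SimpleGraph.fromRel fun x y =>
      (∃ p q, x = Sum.inl p ∧ y = Sum.inl q ∧ (SPG G a b).Adj p q) ∨
      (∃ i, x = Sum.inl U ∧ y = Sum.inr i) ∨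
      (∃ i j, x = Sum.inr i ∧ y = Sum.inr j ∧ i ≠ j)
    ∃ (V' : Type u) (G' : SimpleGraph V') (a' b' : V') (e : SPG G' a' b' ≃g S),
      G'.dist a' b' = G.dist a b ∧
      (∀ X : Geodesic G a b, X ≠ U → UVP G a b X → UVP G' a' b' (e.symm (Sum.inl X))) ∧
      (∀ i : Fin m, UVP G' a' b' (e.symm (Sum.inr i))) :=
  stmt_14_general G a b hlev U hU m
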